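/- arXiv:1906.08039 — 4 statements merged into one kernel-verified Lean document; each statement's English description precedes it below -/
import Mathlib

section
/- Let 1 ≤ p < ∞ and let f : X → ℝ admit a Barron representation ρ with M := ∫_Ω |a|·(‖b‖₁ + |c|) dρ(a,b,c) < ∞. Then for every ε > 0 there exists a Barron representation ρ̃ of f with ( ∫_Ω (|a|·(‖b‖₁ + |c|))^p dρ̃(a,b,c) )^{1/p} ≤ M + ε. (Consequently all the B_p Barron norms of f, 1 ≤ p ≤ ∞, are equal.) -/
open MeasureTheory

noncomputable section

/-- ReLU activation. -/
def relu (t : ℝ) : ℝ := max t 0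

/-- The cube `X = [0,1]^d`. -/
def cube (d : ℕ) : Set (Fin d → ℝ) := Set.Icc 0 1

/-- ℓ¹ norm on `ℝ^d`. -/
def l1norm {d : ℕ} (b : Fin d → ℝ) : ℝ := ∑ i, |b i|

/-- The neuron `(a,b,c) ↦ a · σ(bᵀx + c)`. -/
def act {d : ℕ} (x : Fin d → ℝ) (p : ℝ × (Fin d → ℝ) × ℝ) : ℝ :=
  p.1 * relu ((∑ i, p.2.1 i * x i) + p.2.2)

/-- `ρ` is a Barron representation of `f : X → ℝ`. -/
def IsBarronRep {d : ℕ} (f : (Fin d → ℝ) → ℝ)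
    (ρ : Measure (ℝ × (Fin d → ℝ) × ℝ)) : Prop :=
  IsProbabilityMeasure ρ ∧
    ∀ x ∈ cube d, Integrable (act x) ρ ∧ f x = ∫ p, act x p ∂ρ

/-- The weight `|a| · (‖b‖₁ + |c|)`. -/
def wt {d : ℕ} (p : ℝ × (Fin d → ℝ) × ℝ) : ℝ := |p.1| * (l1norm p.2.1 + |p.2.2|)

/-!
Let `M = ∫ wt ∂ρ > 0`. Reweighting `ρ` by the density `wt / M` and replacing each neuron
`(a, b, c)` by `(M a / wt (a, b, c), b, c)` preserves every integral `∫ act x`, because `act x`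
is linear in `a`; the new representation has weight identically `M`, so all its `L^p` norms of
the weight equal `M`. If `M = 0`, then `f = 0` on the cube and the Dirac mass at the zero neuron
represents it.
-/

open scoped NNReal ENNReal

section ChangeOfMeasure

variable {α β : Type*} [MeasurableSpace α] [MeasurableSpace β] {μ : Measure α} {g : α → ℝ≥0}
  {T : α → β} {h : α → ℝ} {k : β → ℝ}

lemma isProbabilityMeasure_map_withDensity (hT : Measurable T)
    (hgi : Integrable (fun x => (g x : ℝ)) μ) (hg1 : ∫ x, (g x : ℝ) ∂μ = 1) :
    IsProbabilityMeasure ((μ.withDensity fun x => g x).map T) := by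
  refine ⟨?_⟩
  rw [Measure.map_apply hT MeasurableSet.univ, Set.preimage_univ,
    withDensity_apply _ MeasurableSet.univ, setLIntegral_univ, lintegral_coe_eq_integral _ hgi,
    hg1, ENNReal.ofReal_one]

lemma integrable_map_withDensity_of_mul_comp_eq (hg : Measurable g) (hT : Measurable T)
    (hk : AEStronglyMeasurable k ((μ.withDensity fun x => g x).map T))
    (hkh : ∀ x, g x * k (T x) = h x) (hh : Integrable h μ) :
    Integrable k ((μ.withDensity fun x => g x).map T) := by
  rw [integrable_map_measure hk hT.aemeasurable, integrable_withDensity_iff_integrable_smul hg]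
  exact hh.congr (ae_of_all _ fun x => by simp [NNReal.smul_def, hkh])

lemma integral_map_withDensity_of_mul_comp_eq (hg : Measurable g) (hT : Measurable T)
    (hk : AEStronglyMeasurable k ((μ.withDensity fun x => g x).map T))
    (hkh : ∀ x, g x * k (T x) = h x) :
    ∫ y, k y ∂((μ.withDensity fun x => g x).map T) = ∫ x, h x ∂μ := by
  rw [integral_map hT.aemeasurable hk, integral_withDensity_eq_integral_smul hg]
  simp [NNReal.smul_def, hkh]

end ChangeOfMeasure

section Barron

variable {d : ℕ}

lemma l1norm_nonneg (b : Fin d → ℝ) : 0 ≤ l1norm b := by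
  unfold l1norm
  positivity

lemma wt_nonneg (q : ℝ × (Fin d → ℝ) × ℝ) : 0 ≤ wt q :=
  mul_nonneg (abs_nonneg _) (add_nonneg (l1norm_nonneg _) (abs_nonneg _))

lemma measurable_wt : Measurable (wt : ℝ × (Fin d → ℝ) × ℝ → ℝ) := by
  unfold wt l1norm
  fun_prop

lemma continuous_act (x : Fin d → ℝ) : Continuous (act x) := by
  unfold act relu
  fun_prop

lemma act_eq_zero_of_wt_eq_zero (x : Fin d → ℝ) {q : ℝ × (Fin d → ℝ) × ℝ} (h : wt q = 0) :
    act x q = 0 := by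
  obtain ⟨a, b, c⟩ := q
  change |a| * (l1norm b + |c|) = 0 at h
  rcases mul_eq_zero.1 h with ha | hbc
  · simp [act, abs_eq_zero.1 ha]
  · obtain ⟨hb, hc⟩ := (add_eq_zero_iff_of_nonneg (l1norm_nonneg b) (abs_nonneg c)).1 hbc
    have hb' : ∀ i, b i = 0 := fun i => abs_eq_zero.1 <|
      (Finset.sum_eq_zero_iff_of_nonneg fun i _ => abs_nonneg (b i)).1 hb i (Finset.mem_univ i)
    simp [act, relu, hb', abs_eq_zero.1 hc]

lemma isBarronRep_dirac_zero {f : (Fin d → ℝ) → ℝ} (hf : ∀ x ∈ cube d, f x = 0) :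
    IsBarronRep f (Measure.dirac 0) :=
  ⟨inferInstance, fun x hx => ⟨integrable_dirac (by simp), by simp [hf x hx, act]⟩⟩

lemma IsBarronRep.eq_zero_of_integral_wt_eq_zero {f : (Fin d → ℝ) → ℝ}
    {ρ : Measure (ℝ × (Fin d → ℝ) × ℝ)} (hρ : IsBarronRep f ρ) (hint : Integrable wt ρ)
    (h0 : ∫ q, wt q ∂ρ = 0) {x : Fin d → ℝ} (hx : x ∈ cube d) : f x = 0 := by
  have hwt : wt =ᵐ[ρ] 0 := (integral_eq_zero_iff_of_nonneg wt_nonneg hint).1 h0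
  rw [(hρ.2 x hx).2, integral_eq_zero_of_ae
    (hwt.mono fun q hq => act_eq_zero_of_wt_eq_zero x hq)]

def rescale (M : ℝ) (q : ℝ × (Fin d → ℝ) × ℝ) : ℝ × (Fin d → ℝ) × ℝ :=
  (M * q.1 / wt q, q.2)

lemma measurable_rescale (M : ℝ) : Measurable (rescale (d := d) M) :=
  ((measurable_const.mul measurable_fst).div measurable_wt).prodMk measurable_snd

lemma wt_rescale {M : ℝ} (hM : 0 ≤ M) {q : ℝ × (Fin d → ℝ) × ℝ} (hq : wt q ≠ 0) :
    wt (rescale M q) = M := by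
  change |M * q.1 / wt q| * (l1norm q.2.1 + |q.2.2|) = M
  rw [abs_div, abs_mul, abs_of_nonneg hM, abs_of_nonneg (wt_nonneg q), div_mul_eq_mul_div,
    mul_assoc]
  exact mul_div_cancel_right₀ M hq

lemma div_mul_act_rescale {M : ℝ} (hM : M ≠ 0) (x : Fin d → ℝ) (q : ℝ × (Fin d → ℝ) × ℝ) :
    wt q / M * act x (rescale M q) = act x q := by
  by_cases hq : wt q = 0
  · simp [hq, act_eq_zero_of_wt_eq_zero x hq]
  · simp only [act, rescale]
    field_simp

def rescaledRep (ρ : Measure (ℝ × (Fin d → ℝ) × ℝ)) (M : ℝ) : Measure (ℝ × (Fin d → ℝ) × ℝ) :=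
  (ρ.withDensity fun q => ((wt q / M).toNNReal : ℝ≥0∞)).map (rescale M)

section RescaledRep

variable {ρ : Measure (ℝ × (Fin d → ℝ) × ℝ)} {M : ℝ}

lemma isBarronRep_rescaledRep {f : (Fin d → ℝ) → ℝ} (hρ : IsBarronRep f ρ)
    (hint : Integrable wt ρ) (hM : ∫ q, wt q ∂ρ = M) (hM_pos : 0 < M) :
    IsBarronRep f (rescaledRep ρ M) := by
  have hg : Measurable fun q : ℝ × (Fin d → ℝ) × ℝ => (wt q / M).toNNReal :=
    (measurable_wt.div_const M).real_toNNReal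
  have hg_coe (q : ℝ × (Fin d → ℝ) × ℝ) : ((wt q / M).toNNReal : ℝ) = wt q / M :=
    Real.coe_toNNReal _ (div_nonneg (wt_nonneg q) hM_pos.le)
  have hmul (x : Fin d → ℝ) (q : ℝ × (Fin d → ℝ) × ℝ) :
      ((wt q / M).toNNReal : ℝ) * act x (rescale M q) = act x q := by
    rw [hg_coe, div_mul_act_rescale hM_pos.ne']
  refine ⟨isProbabilityMeasure_map_withDensity (measurable_rescale M) ?_ ?_,
    fun x hx => ⟨?_, ?_⟩⟩
  · simpa only [hg_coe] using hint.div_const M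
  · simp only [hg_coe, integral_div, hM, div_self hM_pos.ne']
  · exact integrable_map_withDensity_of_mul_comp_eq hg (measurable_rescale M)
      (continuous_act x).aestronglyMeasurable (hmul x) (hρ.2 x hx).1
  · rw [(hρ.2 x hx).2]
    exact (integral_map_withDensity_of_mul_comp_eq hg (measurable_rescale M)
      (continuous_act x).aestronglyMeasurable (hmul x)).symm

lemma ae_wt_rescaledRep (hM_pos : 0 < M) : ∀ᵐ q ∂rescaledRep ρ M, wt q = M := by
  have hg : Measurable fun q : ℝ × (Fin d → ℝ) × ℝ => ((wt q / M).toNNReal : ℝ≥0∞) :=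
    (measurable_wt.div_const M).real_toNNReal.coe_nnreal_ennreal
  rw [rescaledRep, ae_map_iff (measurable_rescale M).aemeasurable
    (measurableSet_eq_fun measurable_wt measurable_const), ae_withDensity_iff hg]
  refine ae_of_all _ fun q hq => wt_rescale hM_pos.le fun h0 => hq ?_
  simp [h0]

end RescaledRep

theorem IsBarronRep.exists_ae_wt_eq_integral {f : (Fin d → ℝ) → ℝ}
    {ρ : Measure (ℝ × (Fin d → ℝ) × ℝ)} (hρ : IsBarronRep f ρ) (hint : Integrable wt ρ) :
    ∃ ρ' : Measure (ℝ × (Fin d → ℝ) × ℝ), IsBarronRep f ρ' ∧ ∀ᵐ q ∂ρ', wt q = ∫ q, wt q ∂ρ := by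
  have hM : 0 ≤ ∫ q, wt q ∂ρ := integral_nonneg wt_nonneg
  obtain hM | hM := hM.eq_or_lt
  · refine ⟨Measure.dirac 0, isBarronRep_dirac_zero fun x hx =>
      hρ.eq_zero_of_integral_wt_eq_zero hint hM.symm hx, ?_⟩
    rw [← hM, ae_dirac_iff (measurableSet_eq_fun measurable_wt measurable_const)]
    simp [wt, l1norm]
  · exact ⟨rescaledRep ρ _, isBarronRep_rescaledRep hρ hint rfl hM, ae_wt_rescaledRep hM⟩

end Barron

theorem barron_bp_eq_b1_general {d : ℕ} (p : ℝ) (hp : 1 ≤ p)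
    (f : (Fin d → ℝ) → ℝ)
    (ρ : Measure (ℝ × (Fin d → ℝ) × ℝ)) (hρ : IsBarronRep f ρ)
    (hint : Integrable wt ρ) (M : ℝ) (hM : M = ∫ q, wt q ∂ρ)
    (ε : ℝ) (hε : 0 < ε) :
    ∃ ρ' : Measure (ℝ × (Fin d → ℝ) × ℝ),
      IsBarronRep f ρ' ∧ Integrable (fun q => wt q ^ p) ρ' ∧
        (∫ q, wt q ^ p ∂ρ') ^ (1 / p) ≤ M + ε := by
  obtain ⟨ρ', hρ', hwt⟩ := hρ.exists_ae_wt_eq_integral hint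
  have : IsProbabilityMeasure ρ' := hρ'.1
  have hwt_p : (fun q => wt q ^ p) =ᵐ[ρ'] fun _ => M ^ p :=
    hwt.mono fun q hq => by simp only [hq, hM]
  refine ⟨ρ', hρ', (integrable_const _).congr hwt_p.symm, ?_⟩
  have hM_nonneg : 0 ≤ M := hM ▸ integral_nonneg wt_nonneg
  rw [integral_congr_ae hwt_p, integral_const, probReal_univ, one_smul,
    ← Real.rpow_mul hM_nonneg, mul_one_div_cancel (zero_lt_one.trans_le hp).ne', Real.rpow_one]
  linarith

/-- for `1 ≤ p < ∞`, if `f` has a Barron representation with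
`M = ∫ |a|(‖b‖₁+|c|) dρ < ∞`, then for every `ε > 0` there is a Barron
representation `ρ̃` of `f` with `(∫ (|a|(‖b‖₁+|c|))^p dρ̃)^(1/p) ≤ M + ε`. -/
theorem barron_bp_eq_b1 {d : ℕ} (hd : 1 ≤ d) (p : ℝ) (hp : 1 ≤ p)
    (f : (Fin d → ℝ) → ℝ)
    (ρ : Measure (ℝ × (Fin d → ℝ) × ℝ)) (hρ : IsBarronRep f ρ)
    (hint : Integrable wt ρ) (M : ℝ) (hM : M = ∫ q, wt q ∂ρ)
    (ε : ℝ) (hε : 0 < ε) :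
    ∃ ρ' : Measure (ℝ × (Fin d → ℝ) × ℝ),
      IsBarronRep f ρ' ∧ Integrable (fun q => wt q ^ p) ρ' ∧
        (∫ q, wt q ^ p ∂ρ') ^ (1 / p) ≤ M + ε :=
  barron_bp_eq_b1_general p hp f ρ hρ hint M hM ε hε
end
end

section
/- Let f : X → ℝ admit a Barron representation ρ with M₂² := ∫_Ω |a|²·(‖b‖₁ + |c|)² dρ(a,b,c) < ∞. Then there exist a probability measure π on 𝕊^d = {w ∈ ℝ^{d+1} : ‖w‖₁ = 1} and a measurable function a : 𝕊^d → ℝ such that f(x) = ∫_{𝕊^d} a(w) σ(wᵀx̃) dπ(w) for all x ∈ X and ∫_{𝕊^d} |a(w)|² dπ(w) ≤ 2 M₂². (This says every Barron function lies in the RKHS of the kernel k_π(x,x') = E_{w∼π}[σ(wᵀx̃)σ(wᵀx̃')] for some π.) -/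
open MeasureTheory

noncomputable section

/-- `wᵀx̃` for `w ∈ ℝ^{d+1}`, `x̃ = (x,1)`. -/
def actS {d : ℕ} (x : Fin d → ℝ) (w : Fin (d + 1) → ℝ) : ℝ :=
  (∑ i : Fin d, w i.castSucc * x i) + w (Fin.last d)

/-!
By positive homogeneity of the ReLU, a neuron factors as
`a σ(bᵀx + c) = (a ‖(b, c)‖₁) σ(wᵀx̃)` with `w = (b, c) / ‖(b, c)‖₁` on the ℓ¹ sphere.
Let `π` be the law of `w` under `ρ` and `a(w)` the conditional expectation of `a ‖(b, c)‖₁`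
given `w`. The pull-out property of conditional expectation turns the Barron representation
into `f(x) = ∫ a(w) σ(wᵀx̃) dπ(w)`, and conditional Jensen gives `∫ a² dπ ≤ M₂²`.
-/

namespace MeasureTheory

variable {Ω W : Type*} [MeasurableSpace Ω] [MeasurableSpace W] {ρ : Measure Ω} {T : Ω → W}
  {g : Ω → ℝ} {a : W → ℝ}

lemma exists_measurable_comp_eq_condExp_comap (ρ : Measure Ω) (T : Ω → W) (g : Ω → ℝ) :
    ∃ a : W → ℝ, Measurable a ∧ a ∘ T = ρ[g | MeasurableSpace.comap T ‹_›] := by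
  obtain ⟨a, ha, hag⟩ := (stronglyMeasurable_condExp (m := MeasurableSpace.comap T ‹_›)
    (μ := ρ) (f := g)).exists_eq_measurable_comp
  exact ⟨a, ha.measurable, hag.symm⟩

lemma integral_map_mul_eq_of_comp_eq_condExp [IsFiniteMeasure ρ] (hT : Measurable T)
    (hg : Integrable g ρ) (ha : Measurable a) (hag : a ∘ T = ρ[g | MeasurableSpace.comap T ‹_›])
    {h : W → ℝ} (hh : Measurable h) (hgh : Integrable (fun p => g p * h (T p)) ρ) :
    Integrable (fun w => a w * h w) (ρ.map T) ∧
      ∫ w, a w * h w ∂(ρ.map T) = ∫ p, g p * h (T p) ∂ρ := by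
  have hk : StronglyMeasurable[MeasurableSpace.comap T ‹_›] (h ∘ T) :=
    (hh.comp (comap_measurable T)).stronglyMeasurable
  have hpull : ρ[fun p => g p * h (T p) | MeasurableSpace.comap T ‹_›]
      =ᵐ[ρ] fun p => a (T p) * h (T p) := by
    have hpull := condExp_mul_of_stronglyMeasurable_right hk hgh hg
    rwa [← hag] at hpull
  have hah : AEStronglyMeasurable (fun w => a w * h w) (ρ.map T) :=
    (ha.mul hh).aestronglyMeasurable
  refine ⟨(integrable_map_measure hah hT.aemeasurable).2 (integrable_condExp.congr hpull), ?_⟩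
  rw [integral_map hT.aemeasurable hah, ← integral_congr_ae hpull, integral_condExp hT.comap_le]

lemma integral_map_sq_le_of_comp_eq_condExp [IsFiniteMeasure ρ] (hT : Measurable T)
    (hg : MemLp g 2 ρ) (ha : Measurable a) (hag : a ∘ T = ρ[g | MeasurableSpace.comap T ‹_›]) :
    Integrable (fun w => a w ^ 2) (ρ.map T) ∧
      ∫ w, a w ^ 2 ∂(ρ.map T) ≤ ∫ p, g p ^ 2 ∂ρ := by
  have ha2 : AEStronglyMeasurable (fun w => a w ^ 2) (ρ.map T) :=
    (ha.pow_const 2).aestronglyMeasurable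
  have hc : MemLp (a ∘ T) 2 ρ := hag ▸ hg.condExp (by norm_num)
  refine ⟨(integrable_map_measure ha2 hT.aemeasurable).2 ?_, ?_⟩
  · exact (memLp_two_iff_integrable_sq hc.1).1 hc
  rw [integral_map hT.aemeasurable ha2]
  have := integral_norm_condExp_rpow_le (m := MeasurableSpace.comap T ‹_›) (μ := ρ)
    (p := 2) one_le_two (f := g) ?_
  · simpa [Real.rpow_two, sq_abs, ← hag] using this
  · simpa [Real.rpow_two, sq_abs] using (memLp_two_iff_integrable_sq hg.1).1 hg

end MeasureTheory

namespace Barron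

variable {d : ℕ}

lemma measurable_l1norm : Measurable (l1norm (d := d)) :=
  Finset.measurable_sum _ fun i _ => (measurable_pi_apply i).abs

lemma l1norm_nonneg (w : Fin d → ℝ) : 0 ≤ l1norm w :=
  Finset.sum_nonneg fun _ _ => abs_nonneg _

lemma l1norm_eq_zero_iff {w : Fin d → ℝ} : l1norm w = 0 ↔ w = 0 := by
  simp [l1norm, Finset.sum_eq_zero_iff_of_nonneg, funext_iff]

lemma l1norm_smul (s : ℝ) (w : Fin d → ℝ) : l1norm (s • w) = |s| * l1norm w := by
  simp [l1norm, abs_mul, Finset.mul_sum]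

lemma l1norm_snoc (b : Fin d → ℝ) (c : ℝ) :
    l1norm (Fin.snoc b c : Fin (d + 1) → ℝ) = l1norm b + |c| := by
  simp [l1norm, Fin.sum_univ_castSucc]

lemma actS_snoc (x b : Fin d → ℝ) (c : ℝ) :
    actS x (Fin.snoc b c : Fin (d + 1) → ℝ) = (∑ i, b i * x i) + c := by
  simp [actS]

lemma actS_smul (x : Fin d → ℝ) (s : ℝ) (w : Fin (d + 1) → ℝ) :
    actS x (s • w) = s * actS x w := by
  simp [actS, mul_add, Finset.mul_sum, mul_assoc]

lemma continuous_actS (x : Fin d → ℝ) : Continuous (actS (d := d) x) := by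
  unfold actS; fun_prop

lemma relu_mul_of_nonneg {s : ℝ} (hs : 0 ≤ s) (t : ℝ) : relu (s * t) = s * relu t := by
  simp [relu, mul_max_of_nonneg _ _ hs]

lemma continuous_relu : Continuous relu := continuous_id.max continuous_const

def hiddenWeights (p : ℝ × (Fin d → ℝ) × ℝ) : Fin (d + 1) → ℝ := Fin.snoc p.2.1 p.2.2

lemma measurable_hiddenWeights : Measurable (hiddenWeights (d := d)) := by
  unfold hiddenWeights; fun_prop

lemma act_eq_mul_relu_actS_hiddenWeights (x : Fin d → ℝ) (p : ℝ × (Fin d → ℝ) × ℝ) :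
    act x p = p.1 * relu (actS x (hiddenWeights p)) := by
  rw [act, hiddenWeights, actS_snoc]

lemma wt_eq_abs_mul_l1norm_hiddenWeights (p : ℝ × (Fin d → ℝ) × ℝ) :
    wt p = |p.1 * l1norm (hiddenWeights p)| := by
  rw [wt, hiddenWeights, l1norm_snoc, abs_mul,
    abs_of_nonneg (add_nonneg (l1norm_nonneg _) (abs_nonneg _))]

/-- `(b, c) = 0` gives the zero neuron, so any point of the sphere can serve as its direction. -/
def direction (w : Fin (d + 1) → ℝ) : Fin (d + 1) → ℝ :=
  if w = 0 then Pi.single (Fin.last d) 1 else (l1norm w)⁻¹ • w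

lemma measurable_direction : Measurable (direction (d := d)) :=
  Measurable.ite (measurableSet_singleton 0) measurable_const
    ((measurable_l1norm.inv).smul measurable_id)

lemma l1norm_direction (w : Fin (d + 1) → ℝ) : l1norm (direction w) = 1 := by
  unfold direction
  split_ifs with hw
  · simp [l1norm, Pi.single_apply, apply_ite]
  · have : l1norm w ≠ 0 := l1norm_eq_zero_iff.not.2 hw
    rw [l1norm_smul, abs_inv, abs_of_nonneg (l1norm_nonneg w), inv_mul_cancel₀ this]

lemma relu_actS_eq_mul_direction (x : Fin d → ℝ) (w : Fin (d + 1) → ℝ) :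
    relu (actS x w) = l1norm w * relu (actS x (direction w)) := by
  unfold direction
  split_ifs with hw
  · simp [hw, actS, l1norm, relu]
  · have : l1norm w ≠ 0 := l1norm_eq_zero_iff.not.2 hw
    rw [actS_smul, relu_mul_of_nonneg (inv_nonneg.2 (l1norm_nonneg w)),
      mul_inv_cancel_left₀ this]

lemma act_eq_mul_relu_actS_direction (x : Fin d → ℝ) (p : ℝ × (Fin d → ℝ) × ℝ) :
    act x p =
      p.1 * l1norm (hiddenWeights p) * relu (actS x (direction (hiddenWeights p))) := by
  rw [act_eq_mul_relu_actS_hiddenWeights, relu_actS_eq_mul_direction, mul_assoc]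

end Barron

open Barron

theorem barron_subset_rkhs_general {d : ℕ} (f : (Fin d → ℝ) → ℝ)
    (ρ : Measure (ℝ × (Fin d → ℝ) × ℝ)) (hρ : IsBarronRep f ρ)
    (hint : Integrable (fun p => wt p ^ 2) ρ)
    (M2sq : ℝ) (hM2 : M2sq = ∫ p, wt p ^ 2 ∂ρ) :
    ∃ (π : Measure (Fin (d + 1) → ℝ)) (a : (Fin (d + 1) → ℝ) → ℝ),
      IsProbabilityMeasure π ∧ (∀ᵐ w ∂π, l1norm w = 1) ∧ Measurable a ∧
      (∀ x ∈ cube d, Integrable (fun w => a w * relu (actS x w)) π) ∧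
      (∀ x ∈ cube d, f x = ∫ w, a w * relu (actS x w) ∂π) ∧
      Integrable (fun w => a w ^ 2) π ∧
      ∫ w, a w ^ 2 ∂π ≤ 2 * M2sq := by
  obtain ⟨hprob, hrep⟩ := hρ
  set T := direction ∘ hiddenWeights (d := d)
  have hT : Measurable T := measurable_direction.comp measurable_hiddenWeights
  set g := fun p : ℝ × (Fin d → ℝ) × ℝ => p.1 * l1norm (hiddenWeights p)
  have hg_sq : (fun p => g p ^ 2) = fun p => wt p ^ 2 := by
    ext p; simp only [g, wt_eq_abs_mul_l1norm_hiddenWeights, sq_abs]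
  have hg_meas : Measurable g :=
    measurable_fst.mul (measurable_l1norm.comp measurable_hiddenWeights)
  have hg : MemLp g 2 ρ :=
    (memLp_two_iff_integrable_sq hg_meas.aestronglyMeasurable).2 (hg_sq ▸ hint)
  obtain ⟨a, ha, hag⟩ := exists_measurable_comp_eq_condExp_comap ρ T g
  have hrelu (x : Fin d → ℝ) : Measurable fun w => relu (actS x w) :=
    (continuous_relu.comp (continuous_actS x)).measurable
  have hrepr (x) (hx : x ∈ cube d) := integral_map_mul_eq_of_comp_eq_condExp hT
    (hg.integrable one_le_two) ha hag (hrelu x)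
    ((hrep x hx).1.congr (.of_forall (act_eq_mul_relu_actS_direction x)))
  obtain ⟨ha_sq, ha_sq_le⟩ := integral_map_sq_le_of_comp_eq_condExp hT hg ha hag
  refine ⟨ρ.map T, a, Measure.isProbabilityMeasure_map hT.aemeasurable, ?_, ha,
    fun x hx => (hrepr x hx).1, fun x hx => ?_, ha_sq, ?_⟩
  · exact (ae_map_iff hT.aemeasurable (measurableSet_eq_fun measurable_l1norm measurable_const)).2
      (.of_forall fun p => l1norm_direction _)
  · rw [(hrep x hx).2, (hrepr x hx).2]
    exact integral_congr_ae (.of_forall (act_eq_mul_relu_actS_direction x))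
  · have hM2_nonneg : 0 ≤ M2sq := hM2 ▸ integral_nonneg fun p => sq_nonneg _
    calc ∫ w, a w ^ 2 ∂(ρ.map T) ≤ ∫ p, g p ^ 2 ∂ρ := ha_sq_le
      _ = M2sq := by rw [hg_sq, hM2]
      _ ≤ 2 * M2sq := by linarith

/-- every Barron function lies in the RKHS `H_{k_π}` for some
probability measure `π` on the ℓ¹ sphere of `ℝ^{d+1}`. -/
theorem barron_subset_rkhs {d : ℕ} (hd : 1 ≤ d) (f : (Fin d → ℝ) → ℝ)
    (ρ : Measure (ℝ × (Fin d → ℝ) × ℝ)) (hρ : IsBarronRep f ρ)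
    (hint : Integrable (fun p => wt p ^ 2) ρ)
    (M2sq : ℝ) (hM2 : M2sq = ∫ p, wt p ^ 2 ∂ρ) :
    ∃ (π : Measure (Fin (d + 1) → ℝ)) (a : (Fin (d + 1) → ℝ) → ℝ),
      IsProbabilityMeasure π ∧ (∀ᵐ w ∂π, l1norm w = 1) ∧ Measurable a ∧
      (∀ x ∈ cube d, Integrable (fun w => a w * relu (actS x w)) π) ∧
      (∀ x ∈ cube d, f x = ∫ w, a w * relu (actS x w) ∂π) ∧
      Integrable (fun w => a w ^ 2) π ∧
      ∫ w, a w ^ 2 ∂π ≤ 2 * M2sq :=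
  barron_subset_rkhs_general f ρ hρ hint M2sq hM2
end
end

section
/- Let f : X → ℝ admit a Barron representation ρ with M₂² := ∫_Ω |a|²·(‖b‖₁ + |c|)² dρ(a,b,c) < ∞. Let θ₁,…,θ_m, θ_j = (a_j, b_j, c_j), be i.i.d. random variables with common law ρ on some probability space, and set f̂_m(x) = (1/m) Σ_{j=1}^m a_j σ(b_jᵀx + c_j). Then E[ ∫_X |f(x) − f̂_m(x)|² dμ(x) ] ≤ M₂²/m, and E[ (1/m) Σ_{j=1}^m |a_j|·(‖b_j‖₁ + |c_j|) ] ≤ M₂. -/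
open MeasureTheory

noncomputable section

open ProbabilityTheory

/-! For fixed `x ∈ [0,1]^d` the error `f x - f̂_m x` is the deviation of an average of `m` i.i.d.
copies of `a σ(bᵀx + c)` from its mean, so its second moment is the variance of one neuron
divided by `m`. On the cube `|a σ(bᵀx + c)| ≤ |a| (‖b‖₁ + |c|)`, which bounds that variance by
`M₂²`; Tonelli then integrates the pointwise bound against `μ`. The path-norm bound is
`𝔼 W ≤ √(𝔼 W²)` for the weight `W = |a| (‖b‖₁ + |c|)`. -/

section MonteCarlo

variable {E Ω : Type*} {m : ℕ} {θ : Fin m → Ω → E} {g : E → ℝ}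

def empiricalMean (g : E → ℝ) (θ : Fin m → Ω → E) (ω : Ω) : ℝ := (m : ℝ)⁻¹ * ∑ j, g (θ j ω)

lemma empiricalMean_eq_smul_sum :
    empiricalMean g θ = (m : ℝ)⁻¹ • ∑ j, g ∘ θ j := by
  ext ω
  simp [empiricalMean, Finset.sum_apply]

variable [MeasurableSpace E] [MeasurableSpace Ω] {ρ : Measure E} {P : Measure Ω}

lemma memLp_empiricalMean {p : ENNReal} (hθ : ∀ j, MeasurePreserving (θ j) P ρ)
    (hg : MemLp g p ρ) : MemLp (empiricalMean g θ) p P := by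
  rw [empiricalMean_eq_smul_sum]
  exact (memLp_finsetSum' _ fun j _ => hg.comp_measurePreserving (hθ j)).const_smul _

lemma integral_empiricalMean (hm : m ≠ 0) (hθ : ∀ j, MeasurePreserving (θ j) P ρ)
    (hg : Integrable g ρ) : ∫ ω, empiricalMean g θ ω ∂P = ∫ p, g p ∂ρ := by
  have hcomp : ∀ j, ∫ ω, g (θ j ω) ∂P = ∫ p, g p ∂ρ := fun j => by
    rw [← (hθ j).map_eq, integral_map (hθ j).aemeasurable ((hθ j).map_eq ▸ hg.1)]
  have hint : ∀ j ∈ Finset.univ, Integrable (fun ω => g (θ j ω)) P := fun j _ =>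
    (hθ j).integrable_comp_of_integrable hg
  simp only [empiricalMean, integral_const_mul, integral_finsetSum _ hint, hcomp,
    Finset.sum_const, Finset.card_univ, Fintype.card_fin, nsmul_eq_mul]
  field_simp

lemma variance_empiricalMean (hθ : ∀ j, MeasurePreserving (θ j) P ρ) (hindep : iIndepFun θ P)
    (hg : MemLp g 2 ρ) : Var[empiricalMean g θ; P] = Var[g; ρ] / m := by
  have hsum : Var[∑ j, g ∘ θ j; P] = m * Var[g; ρ] := by
    rw [IndepFun.variance_sum (fun j _ => hg.comp_measurePreserving (hθ j))]
    · simp [(hθ _).variance_fun_comp hg.aemeasurable, Function.comp_def]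
    · intro i _ j _ hij
      exact (hindep.indepFun hij).comp₀ (hθ i).aemeasurable (hθ j).aemeasurable
        ((hθ i).map_eq ▸ hg.aemeasurable) ((hθ j).map_eq ▸ hg.aemeasurable)
  rw [empiricalMean_eq_smul_sum, variance_smul, hsum]
  rcases eq_or_ne m 0 with rfl | hm
  · simp
  · field_simp

lemma integral_sq_sub_empiricalMean [IsFiniteMeasure ρ] (hm : m ≠ 0)
    (hθ : ∀ j, MeasurePreserving (θ j) P ρ) (hindep : iIndepFun θ P) (hg : MemLp g 2 ρ) :
    ∫ ω, (∫ p, g p ∂ρ - empiricalMean g θ ω) ^ 2 ∂P = Var[g; ρ] / m := by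
  rw [← variance_empiricalMean hθ hindep hg,
    variance_eq_integral (memLp_empiricalMean hθ hg).aemeasurable,
    integral_empiricalMean hm hθ (hg.integrable one_le_two)]
  simp_rw [sub_sq_comm]

end MonteCarlo

lemma integral_integral_le_of_ae_integral_le {α β : Type*}
    [MeasurableSpace α] [MeasurableSpace β] {μ : Measure α} {ν : Measure β} [SFinite μ]
    [IsProbabilityMeasure ν] {G : α → β → ℝ}
    (hG : Measurable (Function.uncurry G)) (hG0 : ∀ x y, 0 ≤ G x y) {C : ℝ}
    (hint : ∀ᵐ y ∂ν, Integrable (fun x => G x y) μ) (hC : ∀ᵐ y ∂ν, ∫ x, G x y ∂μ ≤ C) :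
    ∫ x, ∫ y, G x y ∂ν ∂μ ≤ C := by
  have hprod : Integrable (Function.uncurry G) (μ.prod ν) := by
    refine (integrable_prod_iff' hG.aestronglyMeasurable).2 ⟨hint, ?_⟩
    refine Integrable.of_bound
      hG.stronglyMeasurable.norm.integral_prod_left'.aestronglyMeasurable C ?_
    filter_upwards [hC] with y hy
    have hGy : 0 ≤ ∫ x, G x y ∂μ := integral_nonneg (hG0 · y)
    simpa [abs_of_nonneg (hG0 _ _), abs_of_nonneg hGy] using hy
  calc ∫ x, ∫ y, G x y ∂ν ∂μ = ∫ y, ∫ x, G x y ∂μ ∂ν := integral_integral_swap hprod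
    _ ≤ ∫ _y, C ∂ν := integral_mono_ae hprod.integral_prod_right (integrable_const C) hC
    _ = C := by simp

lemma integral_le_sqrt_integral_sq {α : Type*} [MeasurableSpace α] {μ : Measure α}
    [IsProbabilityMeasure μ] {g : α → ℝ} (hg : MemLp g 2 μ) :
    ∫ x, g x ∂μ ≤ √(∫ x, g x ^ 2 ∂μ) := by
  refine Real.le_sqrt_of_sq_le ?_
  have hvar := variance_nonneg g μ
  rw [variance_eq_sub hg, sub_nonneg] at hvar
  simpa using hvar

section Barron

variable {d : ℕ}

lemma continuous_uncurry_act : Continuous (Function.uncurry (act (d := d))) := by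
  unfold act relu
  fun_prop

lemma continuous_wt : Continuous (wt (d := d)) := by
  unfold wt l1norm
  fun_prop

lemma abs_act_le_wt {x : Fin d → ℝ} (hx : x ∈ cube d) (p : ℝ × (Fin d → ℝ) × ℝ) :
    |act x p| ≤ wt p := by
  obtain ⟨a, b, c⟩ := p
  have hbx : |∑ i, b i * x i| ≤ l1norm b := by
    refine (Finset.abs_sum_le_sum_abs _ _).trans (Finset.sum_le_sum fun i _ => ?_)
    rw [abs_mul]
    have hxi : |x i| ≤ 1 := abs_le.2 ⟨by linarith [show (0 : ℝ) ≤ x i from hx.1 i], hx.2 i⟩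
    exact mul_le_of_le_one_right (abs_nonneg _) hxi
  have hrelu : relu (∑ i, b i * x i + c) ≤ l1norm b + |c| :=
    max_le ((le_abs_self _).trans ((abs_add_le _ _).trans (by gcongr)))
      (by unfold l1norm; positivity)
  simp only [act, wt, abs_mul]
  rw [abs_of_nonneg (show (0 : ℝ) ≤ relu _ from le_max_right _ _)]
  gcongr

lemma memLp_act {ρ : Measure (ℝ × (Fin d → ℝ) × ℝ)} {x : Fin d → ℝ} (hx : x ∈ cube d)
    (hwt : MemLp wt 2 ρ) : MemLp (act x) 2 ρ :=
  hwt.of_le (continuous_uncurry_act.comp (Continuous.prodMk_right x)).aestronglyMeasurable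
    (ae_of_all _ fun p => by simpa using (abs_act_le_wt hx p).trans (le_abs_self _))

lemma variance_act_le {ρ : Measure (ℝ × (Fin d → ℝ) × ℝ)} [IsProbabilityMeasure ρ]
    {x : Fin d → ℝ} (hx : x ∈ cube d) (hwt : MemLp wt 2 ρ) :
    Var[act x; ρ] ≤ ∫ p, wt p ^ 2 ∂ρ :=
  calc Var[act x; ρ] ≤ ∫ p, act x p ^ 2 ∂ρ :=
        variance_le_expectation_sq (memLp_act hx hwt).aestronglyMeasurable
    _ ≤ ∫ p, wt p ^ 2 ∂ρ :=
        integral_mono (memLp_act hx hwt).integrable_sq hwt.integrable_sq fun p =>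
          sq_le_sq.2 ((abs_act_le_wt hx p).trans (le_abs_self _))

lemma measurable_integral_act (ρ : Measure (ℝ × (Fin d → ℝ) × ℝ)) [SFinite ρ] :
    Measurable fun x : Fin d → ℝ => ∫ p, act x p ∂ρ :=
  continuous_uncurry_act.stronglyMeasurable.integral_prod_right'.measurable

lemma measurable_uncurry_sq_sub_empiricalMean_act {Ω : Type*} [MeasurableSpace Ω]
    {ρ : Measure (ℝ × (Fin d → ℝ) × ℝ)} [SFinite ρ] {m : ℕ}
    {θ : Fin m → Ω → ℝ × (Fin d → ℝ) × ℝ} (hmeas : ∀ j, Measurable (θ j)) :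
    Measurable (Function.uncurry fun ω x =>
      (∫ p, act x p ∂ρ - empiricalMean (act x) θ ω) ^ 2) := by
  have hact : ∀ j, Measurable fun q : Ω × (Fin d → ℝ) => act q.2 (θ j q.1) := fun j =>
    continuous_uncurry_act.measurable.comp
      (measurable_snd.prodMk ((hmeas j).comp measurable_fst))
  exact (((measurable_integral_act ρ).comp measurable_snd).sub
    (measurable_const.mul (Finset.measurable_sum _ fun j _ => hact j))).pow_const 2

end Barron

theorem barron_monte_carlo_general {d : ℕ} (f : (Fin d → ℝ) → ℝ)
    (ρ : Measure (ℝ × (Fin d → ℝ) × ℝ)) (hρ : IsBarronRep f ρ)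
    (hint : Integrable (fun p => wt p ^ 2) ρ)
    (M2sq : ℝ) (hM2 : M2sq = ∫ p, wt p ^ 2 ∂ρ)
    (μ : Measure (Fin d → ℝ)) (hμ : IsProbabilityMeasure μ)
    (hμsupp : μ (cube d)ᶜ = 0)
    {Ω' : Type} [MeasurableSpace Ω'] (P : Measure Ω') (hP : IsProbabilityMeasure P)
    (m : ℕ) (hm : 1 ≤ m) (θ : Fin m → Ω' → ℝ × (Fin d → ℝ) × ℝ)
    (hmeas : ∀ j, Measurable (θ j))
    (hindep : iIndepFun θ P)
    (hlaw : ∀ j, Measure.map (θ j) P = ρ) :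
    (∫ ω, ∫ x, (f x - (m : ℝ)⁻¹ * ∑ j, act x (θ j ω)) ^ 2 ∂μ ∂P ≤ M2sq / m) ∧
    (∫ ω, (m : ℝ)⁻¹ * ∑ j, wt (θ j ω) ∂P ≤ Real.sqrt M2sq) := by
  have : IsProbabilityMeasure ρ := hρ.1
  have hθ : ∀ j, MeasurePreserving (θ j) P ρ := fun j => ⟨hmeas j, hlaw j⟩
  have hm0 : m ≠ 0 := by omega
  have hwt : MemLp wt 2 ρ :=
    (memLp_two_iff_integrable_sq continuous_wt.aestronglyMeasurable).2 hint
  have hcube : ∀ᵐ x ∂μ, x ∈ cube d := mem_ae_iff.2 hμsupp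
  refine ⟨?_, ?_⟩
  · have hf : ∀ ω, ∫ x, (f x - (m : ℝ)⁻¹ * ∑ j, act x (θ j ω)) ^ 2 ∂μ =
        ∫ x, (∫ p, act x p ∂ρ - empiricalMean (act x) θ ω) ^ 2 ∂μ := fun ω =>
      integral_congr_ae (hcube.mono fun x hx => by simp only [(hρ.2 x hx).2, empiricalMean])
    simp_rw [hf]
    refine integral_integral_le_of_ae_integral_le ?_ (fun _ _ => sq_nonneg _) ?_ ?_
    · exact measurable_uncurry_sq_sub_empiricalMean_act hmeas
    · filter_upwards [hcube] with x hx
      exact ((memLp_const _).sub (memLp_empiricalMean hθ (memLp_act hx hwt))).integrable_sq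
    · filter_upwards [hcube] with x hx
      rw [integral_sq_sub_empiricalMean hm0 hθ hindep (memLp_act hx hwt), hM2]
      gcongr
      exact variance_act_le hx hwt
  · calc ∫ ω, empiricalMean wt θ ω ∂P = ∫ p, wt p ∂ρ :=
          integral_empiricalMean hm0 hθ (hwt.integrable one_le_two)
      _ ≤ √M2sq := hM2 ▸ integral_le_sqrt_integral_sq hwt

/-- Monte-Carlo estimate for i.i.d. samples from a Barron
representation: expected squared `L²(μ)` error is at most `M₂²/m` and the
expected path norm is at most `M₂`. -/
theorem barron_monte_carlo {d : ℕ} (hd : 1 ≤ d) (f : (Fin d → ℝ) → ℝ)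
    (ρ : Measure (ℝ × (Fin d → ℝ) × ℝ)) (hρ : IsBarronRep f ρ)
    (hint : Integrable (fun p => wt p ^ 2) ρ)
    (M2sq : ℝ) (hM2 : M2sq = ∫ p, wt p ^ 2 ∂ρ)
    (μ : Measure (Fin d → ℝ)) (hμ : IsProbabilityMeasure μ)
    (hμsupp : μ (cube d)ᶜ = 0)
    {Ω' : Type} [MeasurableSpace Ω'] (P : Measure Ω') (hP : IsProbabilityMeasure P)
    (m : ℕ) (hm : 1 ≤ m) (θ : Fin m → Ω' → ℝ × (Fin d → ℝ) × ℝ)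
    (hmeas : ∀ j, Measurable (θ j))
    (hindep : iIndepFun θ P)
    (hlaw : ∀ j, Measure.map (θ j) P = ρ) :
    (∫ ω, ∫ x, (f x - (m : ℝ)⁻¹ * ∑ j, act x (θ j ω)) ^ 2 ∂μ ∂P ≤ M2sq / m) ∧
    (∫ ω, (m : ℝ)⁻¹ * ∑ j, wt (θ j ω) ∂P ≤ Real.sqrt M2sq) :=
  barron_monte_carlo_general f ρ hρ hint M2sq hM2 μ hμ hμsupp P hP m hm θ hmeas hindep hlaw
end
end

section
/- Fix n ≥ 1, Q > 0 and points x₁,…,x_n ∈ X. Let F_Q be the set of all functions f : X → ℝ admitting a Barron representation ρ with ∫_Ω |a|·(‖b‖₁ + |c|) dρ(a,b,c) ≤ Q. Then the Rademacher complexity of F_Q satisfies (1/(n·2^n)) Σ_{ξ ∈ {−1,1}^n} sup_{f ∈ F_Q} Σ_{i=1}^n ξ_i f(x_i) ≤ 2Q·√(2 ln(2d)/n). -/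
open MeasureTheory

noncomputable section

/-!
Write `relu t = (t + |t|) / 2` and use positive homogeneity to rescale every neuron `(a, b, c)`
to weight `|a| (‖b‖₁ + |c|)` times a neuron whose parameter `(c, b)` lies in the ℓ¹ unit ball.
For a sign vector `ξ`, the Rademacher sum of any `f` in the Barron ball is then at most `Q` times
`(M ξ + G ξ + G (-ξ)) / 2`, where `M ξ = maxⱼ |∑ᵢ ξᵢ vⱼ(i)|` is the largest correlation of `ξ` with
the `d + 1` coordinate vectors of the augmented points `(1, xᵢ)` (the linear part: a linear
function on the ℓ¹ ball is maximised at a vertex), and `G ξ` is the supremum over the ball of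
`∑ᵢ ξᵢ |bᵀxᵢ + c|`. The Ledoux–Talagrand contraction principle, proved by pairing sign vectors
that differ in one coordinate, bounds the average of `G` by the average of `M`, so the complexity
is at most `(3 / 2) Q · avg M / n`. Massart's finite-class lemma
`avg M ≤ √(2 n log (2 (d + 1)))` then gives the claim for `d ≥ 2`; for `d = 1` it is too weak and
the second-moment bound `avg M ≤ √(2 n)` is used instead.
-/

open Finset Matrix Function Real

namespace Barron

section SignVectors

variable {n : ℕ}

def signVec (ξ : Fin n → Bool) : Fin n → ℝ := fun i => if ξ i then 1 else -1

lemma abs_signVec (ξ : Fin n → Bool) (i : Fin n) : |signVec ξ i| = 1 := by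
  unfold signVec; split <;> simp

lemma signVec_not (ξ : Fin n → Bool) : signVec (fun i => !ξ i) = -signVec ξ := by
  ext i; by_cases h : ξ i <;> simp [signVec, h]

lemma signVec_update_not_self (ξ : Fin n → Bool) (k : Fin n) :
    signVec (update ξ k (!ξ k)) k = -signVec ξ k := by
  unfold signVec; cases ξ k <;> simp

lemma signVec_update_not_of_ne (ξ : Fin n → Bool) {i k : Fin n} (h : i ≠ k) :
    signVec (update ξ k (!ξ k)) i = signVec ξ i := by
  simp [signVec, update_of_ne h]

lemma signVec_dotProduct_le (ξ : Fin n → Bool) (a : Fin n → ℝ) :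
    signVec ξ ⬝ᵥ a ≤ ∑ i, |a i| :=
  (le_abs_self _).trans <| (abs_sum_le_sum_abs _ _).trans_eq <|
    sum_congr rfl fun i _ => by rw [abs_mul, abs_signVec, one_mul]

lemma involutive_update_not (k : Fin n) :
    Involutive fun ξ : Fin n → Bool => update ξ k (!ξ k) := by
  intro ξ; ext i; rcases eq_or_ne i k with rfl | h <;> simp [update_of_ne, *]

lemma involutive_not : Involutive fun (ξ : Fin n → Bool) i => !ξ i := by
  intro ξ; simp

end SignVectors

lemma sum_comp_involutive {α : Type*} [Fintype α] {e : α → α} (he : Involutive e)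
    (f : α → ℝ) : ∑ a, f (e a) = ∑ a, f a :=
  Equiv.sum_comp (he.toPerm e) f

lemma sum_le_sum_of_add_comp_involutive_le {α : Type*} [Fintype α] {e : α → α}
    (he : Involutive e) {f g : α → ℝ} (h : ∀ a, f a + f (e a) ≤ g a + g (e a)) :
    ∑ a, f a ≤ ∑ a, g a := by
  have := sum_le_sum fun a (_ : a ∈ univ) => h a
  rw [sum_add_distrib, sum_add_distrib, sum_comp_involutive he, sum_comp_involutive he] at this
  linarith

lemma dotProduct_eq_add_of_forall_ne {n : ℕ} {v v' a a' : Fin n → ℝ} (k : Fin n)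
    (hv : ∀ i ≠ k, v' i = v i) (ha : ∀ i ≠ k, a' i = a i) :
    v' ⬝ᵥ a' = v ⬝ᵥ a + (v' k * a' k - v k * a k) := by
  simp only [dotProduct, ← add_sum_erase _ _ (mem_univ k)]
  have : ∑ i ∈ univ.erase k, v' i * a' i = ∑ i ∈ univ.erase k, v i * a i :=
    sum_congr rfl fun i hi => by rw [hv i (ne_of_mem_erase hi), ha i (ne_of_mem_erase hi)]
  rw [this]; ring

section Contraction

variable {T : Type*} {n : ℕ}

lemma ciSup_add_ciSup_neg_le [Nonempty T] (u p R : T → ℝ) (hp : ∀ θ θ', p θ - p θ' ≤ |u θ - u θ'|)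
    (hC : BddAbove (Set.range fun θ => u θ + R θ))
    (hD : BddAbove (Set.range fun θ => -u θ + R θ)) :
    (⨆ θ, p θ + R θ) + (⨆ θ, -p θ + R θ) ≤ (⨆ θ, u θ + R θ) + ⨆ θ, -u θ + R θ := by
  refine ciSup_add_ciSup_le fun θ θ' => ?_
  have hC' := fun θ => le_ciSup hC θ
  have hD' := fun θ => le_ciSup hD θ
  rcases abs_cases (u θ - u θ') with ⟨h, -⟩ | ⟨h, -⟩
  · linarith [hp θ θ', hC' θ, hD' θ']
  · linarith [hp θ θ', hC' θ', hD' θ]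

lemma bddAbove_range_signVec_dotProduct {a : T → Fin n → ℝ} {C : ℝ} (ha : ∀ θ i, |a θ i| ≤ C)
    (ξ : Fin n → Bool) : BddAbove (Set.range fun θ => signVec ξ ⬝ᵥ a θ) :=
  ⟨n * C, Set.forall_mem_range.2 fun θ => (signVec_dotProduct_le ξ _).trans <|
    (sum_le_sum fun i _ => ha θ i).trans_eq (by simp)⟩

variable {φ : ℝ → ℝ} {u : T → Fin n → ℝ} {B : ℝ}

lemma bddAbove_range_signVec_dotProduct_piecewise (hu : ∀ θ i, |u θ i| ≤ B)
    (hφ : LipschitzWith 1 φ) (S : Finset (Fin n)) (ξ : Fin n → Bool) :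
    BddAbove (Set.range fun θ => signVec ξ ⬝ᵥ S.piecewise (u θ) (φ ∘ u θ)) := by
  have hφu : ∀ t, |φ t| ≤ |φ 0| + |t| := fun t => by
    simpa [Real.dist_eq, add_comm] using (dist_triangle (φ t) (φ 0) 0).trans
      (add_le_add_left (hφ.dist_le_mul t 0) _)
  refine bddAbove_range_signVec_dotProduct (C := |φ 0| + B) (fun θ i => ?_) ξ
  by_cases hi : i ∈ S
  · rw [piecewise_eq_of_mem _ _ _ hi]; linarith [hu θ i, abs_nonneg (φ 0)]
  · rw [piecewise_eq_of_notMem _ _ _ hi, Function.comp_apply]; linarith [hu θ i, hφu (u θ i)]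

variable [Nonempty T]

lemma ciSup_piecewise_add_update_not_le (hu : ∀ θ i, |u θ i| ≤ B) (hφ : LipschitzWith 1 φ)
    {S : Finset (Fin n)} {k : Fin n} (hk : k ∉ S) (ξ : Fin n → Bool) :
    (⨆ θ, signVec ξ ⬝ᵥ S.piecewise (u θ) (φ ∘ u θ)) +
        (⨆ θ, signVec (update ξ k (!ξ k)) ⬝ᵥ S.piecewise (u θ) (φ ∘ u θ)) ≤
      (⨆ θ, signVec ξ ⬝ᵥ (insert k S).piecewise (u θ) (φ ∘ u θ)) +
        ⨆ θ, signVec (update ξ k (!ξ k)) ⬝ᵥ (insert k S).piecewise (u θ) (φ ∘ u θ) := by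
  set σ := signVec ξ k
  set R := fun θ => signVec ξ ⬝ᵥ S.piecewise (u θ) (φ ∘ u θ) - σ * φ (u θ k)
  have hS : ∀ θ, S.piecewise (u θ) (φ ∘ u θ) k = φ (u θ k) := fun θ =>
    piecewise_eq_of_notMem _ _ _ hk
  have hins : ∀ θ, ∀ i ≠ k,
      (insert k S).piecewise (u θ) (φ ∘ u θ) i = S.piecewise (u θ) (φ ∘ u θ) i := by
    intro θ i hi; rw [piecewise_insert, update_of_ne hi]
  have hins_self : ∀ θ, (insert k S).piecewise (u θ) (φ ∘ u θ) k = u θ k := by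
    intro θ; rw [piecewise_insert, update_self]
  have hflip : ∀ i ≠ k, signVec (update ξ k (!ξ k)) i = signVec ξ i := fun i hi =>
    signVec_update_not_of_ne ξ hi
  have e₁ : ∀ θ, signVec ξ ⬝ᵥ S.piecewise (u θ) (φ ∘ u θ) = σ * φ (u θ k) + R θ := by
    intro θ; ring
  have e₂ : ∀ θ, signVec (update ξ k (!ξ k)) ⬝ᵥ S.piecewise (u θ) (φ ∘ u θ) =
      -(σ * φ (u θ k)) + R θ := by
    intro θ
    rw [dotProduct_eq_add_of_forall_ne k hflip (fun _ _ => rfl), signVec_update_not_self, hS]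
    ring
  have e₃ : ∀ θ, signVec ξ ⬝ᵥ (insert k S).piecewise (u θ) (φ ∘ u θ) = σ * u θ k + R θ := by
    intro θ
    rw [dotProduct_eq_add_of_forall_ne k (fun _ _ => rfl) (hins θ), hins_self, hS]
    ring
  have e₄ : ∀ θ, signVec (update ξ k (!ξ k)) ⬝ᵥ (insert k S).piecewise (u θ) (φ ∘ u θ) =
      -(σ * u θ k) + R θ := by
    intro θ
    rw [dotProduct_eq_add_of_forall_ne k hflip (hins θ), signVec_update_not_self, hins_self, hS]
    ring
  simp only [e₁, e₂, e₃, e₄]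
  refine ciSup_add_ciSup_neg_le (fun θ => σ * u θ k) (fun θ => σ * φ (u θ k)) R
    (fun θ θ' => ?_) ?_ ?_
  · have hσ : |σ| = 1 := abs_signVec ξ k
    calc σ * φ (u θ k) - σ * φ (u θ' k) = σ * (φ (u θ k) - φ (u θ' k)) := by ring
      _ ≤ |φ (u θ k) - φ (u θ' k)| := (le_abs_self _).trans_eq (by rw [abs_mul, hσ, one_mul])
      _ ≤ |u θ k - u θ' k| := by simpa [Real.dist_eq] using hφ.dist_le_mul (u θ k) (u θ' k)
      _ = |σ * u θ k - σ * u θ' k| := by rw [← mul_sub, abs_mul, hσ, one_mul]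
  · simpa only [e₃] using bddAbove_range_signVec_dotProduct_piecewise hu hφ (insert k S) ξ
  · simpa only [e₄] using
      bddAbove_range_signVec_dotProduct_piecewise hu hφ (insert k S) (update ξ k (!ξ k))

lemma sum_ciSup_piecewise_le_insert (hu : ∀ θ i, |u θ i| ≤ B) (hφ : LipschitzWith 1 φ)
    {S : Finset (Fin n)} {k : Fin n} (hk : k ∉ S) :
    ∑ ξ, ⨆ θ, signVec ξ ⬝ᵥ S.piecewise (u θ) (φ ∘ u θ) ≤
      ∑ ξ, ⨆ θ, signVec ξ ⬝ᵥ (insert k S).piecewise (u θ) (φ ∘ u θ) :=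
  sum_le_sum_of_add_comp_involutive_le (involutive_update_not k)
    (ciSup_piecewise_add_update_not_le hu hφ hk)

theorem sum_ciSup_signVec_dotProduct_comp_le (hu : ∀ θ i, |u θ i| ≤ B)
    (hφ : LipschitzWith 1 φ) :
    ∑ ξ, ⨆ θ, signVec ξ ⬝ᵥ (φ ∘ u θ) ≤ ∑ ξ, ⨆ θ, signVec ξ ⬝ᵥ u θ := by
  have key : ∀ S : Finset (Fin n), ∑ ξ, ⨆ θ, signVec ξ ⬝ᵥ (φ ∘ u θ) ≤
      ∑ ξ, ⨆ θ, signVec ξ ⬝ᵥ S.piecewise (u θ) (φ ∘ u θ) := by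
    intro S
    induction S using Finset.induction with
    | empty => simp only [piecewise_empty, le_refl]
    | insert k S hk ih => exact ih.trans (sum_ciSup_piecewise_le_insert hu hφ hk)
  simpa only [piecewise_univ] using key univ

end Contraction

section Massart

variable {n : ℕ}

lemma sum_exp_signVec_dotProduct (a : Fin n → ℝ) :
    ∑ ξ, exp (signVec ξ ⬝ᵥ a) = ∏ i, 2 * cosh (a i) := by
  have h : ∀ i, 2 * cosh (a i) = ∑ b : Bool, exp ((if b then 1 else -1) * a i) := by
    intro i; simp [cosh_eq]; ring
  simp only [h, Fintype.prod_sum, dotProduct, exp_sum]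
  rfl

lemma sum_exp_signVec_dotProduct_le {a : Fin n → ℝ} {r : ℝ} (ha : ∀ i, |a i| ≤ r) :
    ∑ ξ, exp (signVec ξ ⬝ᵥ a) ≤ 2 ^ n * exp (n * r ^ 2 / 2) := by
  rw [sum_exp_signVec_dotProduct]
  calc ∏ i, 2 * cosh (a i) ≤ ∏ _i : Fin n, 2 * exp (r ^ 2 / 2) := by
        refine prod_le_prod (fun i _ => by positivity) fun i _ => ?_
        have : a i ^ 2 ≤ r ^ 2 := by
          simpa only [sq_abs] using pow_le_pow_left₀ (abs_nonneg _) (ha i) 2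
        gcongr
        exact (cosh_le_exp_half_sq _).trans (by gcongr)
    _ = 2 ^ n * exp (n * r ^ 2 / 2) := by
        rw [prod_const, card_univ, Fintype.card_fin, mul_pow, ← exp_nat_mul]; ring_nf

lemma sum_signVec_mul_signVec (i j : Fin n) :
    ∑ ξ, signVec ξ i * signVec ξ j = if i = j then 2 ^ n else 0 := by
  split_ifs with h
  · subst h
    have : ∀ ξ : Fin n → Bool, signVec ξ i * signVec ξ i = 1 := fun ξ => by
      rw [← abs_mul_self, abs_mul, abs_signVec, one_mul]
    simp [this]
  · have := sum_comp_involutive (involutive_update_not i) fun ξ => signVec ξ i * signVec ξ j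
    simp only [signVec_update_not_self, signVec_update_not_of_ne _ (Ne.symm h), neg_mul,
      sum_neg_distrib] at this
    linarith

lemma sum_sq_signVec_dotProduct (a : Fin n → ℝ) :
    ∑ ξ, (signVec ξ ⬝ᵥ a) ^ 2 = 2 ^ n * ∑ i, a i ^ 2 := by
  calc ∑ ξ, (signVec ξ ⬝ᵥ a) ^ 2
      = ∑ ξ, ∑ i, ∑ j, signVec ξ i * signVec ξ j * (a i * a j) :=
        sum_congr rfl fun ξ _ => by
          rw [sq, dotProduct, sum_mul_sum]
          exact sum_congr rfl fun i _ => sum_congr rfl fun j _ => by ring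
    _ = ∑ i, ∑ j, (∑ ξ, signVec ξ i * signVec ξ j) * (a i * a j) := by
        rw [sum_comm]; refine sum_congr rfl fun i _ => ?_
        rw [sum_comm]; exact sum_congr rfl fun j _ => (sum_mul _ _ _).symm
    _ = 2 ^ n * ∑ i, a i ^ 2 := by
        simp [sum_signVec_mul_signVec, ite_mul, mul_sum, sq]

variable {J : Type*} [Fintype J] [Nonempty J]

def maxAbsCorr (v : J → Fin n → ℝ) (ξ : Fin n → Bool) : ℝ :=
  univ.sup' univ_nonempty fun j => |signVec ξ ⬝ᵥ v j|

lemma abs_le_maxAbsCorr (v : J → Fin n → ℝ) (ξ : Fin n → Bool) (j : J) :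
    |signVec ξ ⬝ᵥ v j| ≤ maxAbsCorr v ξ :=
  le_sup' (fun j => |signVec ξ ⬝ᵥ v j|) (mem_univ j)

lemma maxAbsCorr_nonneg (v : J → Fin n → ℝ) (ξ : Fin n → Bool) : 0 ≤ maxAbsCorr v ξ :=
  (abs_nonneg _).trans (abs_le_maxAbsCorr v ξ (Classical.arbitrary J))

lemma exists_maxAbsCorr_eq (v : J → Fin n → ℝ) (ξ : Fin n → Bool) :
    ∃ j, maxAbsCorr v ξ = |signVec ξ ⬝ᵥ v j| := by
  obtain ⟨j, -, hj⟩ := exists_mem_eq_sup' univ_nonempty fun j => |signVec ξ ⬝ᵥ v j|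
  exact ⟨j, hj⟩

variable {v : J → Fin n → ℝ}

lemma sum_exp_mul_maxAbsCorr_le (hv : ∀ j i, |v j i| ≤ 1) {l : ℝ} (hl : 0 < l) :
    ∑ ξ, exp (l * maxAbsCorr v ξ) ≤ 2 * Fintype.card J * (2 ^ n * exp (n * l ^ 2 / 2)) := by
  have hpt : ∀ ξ, exp (l * maxAbsCorr v ξ) ≤
      ∑ j, (exp (signVec ξ ⬝ᵥ (l • v j)) + exp (signVec ξ ⬝ᵥ ((-l) • v j))) := by
    intro ξ
    obtain ⟨j, hj⟩ := exists_maxAbsCorr_eq v ξ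
    have : exp (l * maxAbsCorr v ξ) ≤
        exp (signVec ξ ⬝ᵥ (l • v j)) + exp (signVec ξ ⬝ᵥ ((-l) • v j)) := by
      simpa [hj, abs_mul, abs_of_pos hl, dotProduct_smul] using exp_abs_le (l * (signVec ξ ⬝ᵥ v j))
    exact this.trans <| single_le_sum (f := fun j => exp (signVec ξ ⬝ᵥ (l • v j)) +
      exp (signVec ξ ⬝ᵥ ((-l) • v j))) (fun _ _ => by positivity) (mem_univ j)
  have hlv : ∀ c, |c| = l → ∀ j i, |(c • v j) i| ≤ l := fun c hc j i => by
    simpa [abs_mul, hc] using mul_le_mul_of_nonneg_left (hv j i) hl.le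
  calc ∑ ξ, exp (l * maxAbsCorr v ξ)
      ≤ ∑ j, ∑ ξ, (exp (signVec ξ ⬝ᵥ (l • v j)) + exp (signVec ξ ⬝ᵥ ((-l) • v j))) := by
        rw [sum_comm]; exact sum_le_sum fun ξ _ => hpt ξ
    _ ≤ ∑ _j : J, 2 * (2 ^ n * exp (n * l ^ 2 / 2)) := by
        refine sum_le_sum fun j _ => ?_
        rw [sum_add_distrib, two_mul]
        exact add_le_add (sum_exp_signVec_dotProduct_le (hlv l (abs_of_pos hl) j))
          (sum_exp_signVec_dotProduct_le (hlv (-l) (by simp [abs_of_pos hl]) j))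
    _ = _ := by rw [sum_const, card_univ, nsmul_eq_mul]; ring

lemma mul_sum_maxAbsCorr_le (hv : ∀ j i, |v j i| ≤ 1) {l : ℝ} (hl : 0 < l) :
    l * ∑ ξ, maxAbsCorr v ξ ≤ 2 ^ n * (log (2 * Fintype.card J) + n * l ^ 2 / 2) := by
  have hjensen : exp (∑ ξ, (2 ^ n : ℝ)⁻¹ * (l * maxAbsCorr v ξ)) ≤
      ∑ ξ : Fin n → Bool, (2 ^ n : ℝ)⁻¹ * exp (l * maxAbsCorr v ξ) := by
    refine convexOn_exp.map_sum_le (fun _ _ => by positivity) ?_ (fun _ _ => Set.mem_univ _)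
    simp
  have hexp : exp ((2 ^ n : ℝ)⁻¹ * (l * ∑ ξ, maxAbsCorr v ξ)) ≤
      exp (log (2 * Fintype.card J) + n * l ^ 2 / 2) := by
    rw [mul_sum, mul_sum, exp_add, exp_log (by positivity)]
    calc _ ≤ ∑ ξ : Fin n → Bool, (2 ^ n : ℝ)⁻¹ * exp (l * maxAbsCorr v ξ) := hjensen
      _ = (2 ^ n : ℝ)⁻¹ * ∑ ξ, exp (l * maxAbsCorr v ξ) := (mul_sum _ _ _).symm
      _ ≤ (2 ^ n : ℝ)⁻¹ * (2 * Fintype.card J * (2 ^ n * exp (n * l ^ 2 / 2))) := by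
          gcongr; exact sum_exp_mul_maxAbsCorr_le hv hl
      _ = _ := by field_simp
  rw [← inv_mul_le_iff₀ (by positivity)]
  exact exp_le_exp.1 hexp

theorem sum_maxAbsCorr_le_sqrt_log (hv : ∀ j i, |v j i| ≤ 1) (hn : 0 < n) :
    ∑ ξ, maxAbsCorr v ξ ≤ 2 ^ n * √(2 * n * log (2 * Fintype.card J)) := by
  set L := log (2 * Fintype.card J)
  have hL : 0 < L := log_pos (by have := Fintype.card_pos (α := J); norm_cast; omega)
  set s := √(2 * n * L)
  have hs : 0 < s := sqrt_pos.2 (by positivity)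
  have hs2 : s ^ 2 = 2 * n * L := sq_sqrt (by positivity)
  have hn' : (0 : ℝ) < n := by exact_mod_cast hn
  -- Massart's choice of temperature, `l = √(2 L / n)`
  have h := mul_sum_maxAbsCorr_le hv (div_pos hs hn')
  have : n * (s / n) ^ 2 / 2 = L := by field_simp; rw [hs2]; ring
  rw [this, ← two_mul] at h
  have : s * ∑ ξ, maxAbsCorr v ξ ≤ s * (2 ^ n * s) := by
    calc s * ∑ ξ, maxAbsCorr v ξ = n * (s / n * ∑ ξ, maxAbsCorr v ξ) := by field_simp
      _ ≤ n * (2 ^ n * (2 * L)) := by gcongr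
      _ = s * (2 ^ n * s) := by linear_combination (-(2 : ℝ) ^ n) * hs2
  exact le_of_mul_le_mul_left this hs

theorem sum_maxAbsCorr_le_sqrt (hv : ∀ j i, |v j i| ≤ 1) :
    ∑ ξ, maxAbsCorr v ξ ≤ 2 ^ n * √(Fintype.card J * n) := by
  have hsq : ∀ ξ, maxAbsCorr v ξ ^ 2 ≤ ∑ j, (signVec ξ ⬝ᵥ v j) ^ 2 := fun ξ => by
    obtain ⟨j, hj⟩ := exists_maxAbsCorr_eq v ξ
    rw [hj, sq_abs]
    exact single_le_sum (f := fun j => (signVec ξ ⬝ᵥ v j) ^ 2) (fun _ _ => sq_nonneg _)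
      (mem_univ j)
  have hsum : ∑ ξ, maxAbsCorr v ξ ^ 2 ≤ 2 ^ n * (Fintype.card J * n) := by
    calc ∑ ξ, maxAbsCorr v ξ ^ 2 ≤ ∑ j, ∑ ξ, (signVec ξ ⬝ᵥ v j) ^ 2 := by
          rw [sum_comm]; exact sum_le_sum fun ξ _ => hsq ξ
      _ ≤ ∑ _j : J, 2 ^ n * ∑ _i : Fin n, (1 : ℝ) := by
          refine sum_le_sum fun j _ => ?_
          rw [sum_sq_signVec_dotProduct]
          gcongr with i
          simpa only [sq_abs, one_pow] using pow_le_pow_left₀ (abs_nonneg _) (hv j i) 2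
      _ = 2 ^ n * (Fintype.card J * n) := by simp; ring
  have hcs := sq_sum_le_card_mul_sum_sq (s := univ) (f := fun ξ => maxAbsCorr v ξ)
  rw [card_univ, Fintype.card_fun, Fintype.card_bool, Fintype.card_fin] at hcs
  rw [← sqrt_sq (by positivity : (0 : ℝ) ≤ 2 ^ n), ← sqrt_mul (by positivity)]
  refine le_sqrt_of_sq_le (hcs.trans ?_)
  push_cast
  calc (2 : ℝ) ^ n * ∑ ξ, maxAbsCorr v ξ ^ 2 ≤ 2 ^ n * (2 ^ n * (Fintype.card J * n)) := by
        gcongr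
    _ = _ := by ring

end Massart

section L1Ball

variable {ι : Type*} [Fintype ι]

def l1Ball (ι : Type*) [Fintype ι] : Set (ι → ℝ) := {w | ∑ j, |w j| ≤ 1}

lemma zero_mem_l1Ball : (0 : ι → ℝ) ∈ l1Ball ι := by simp [l1Ball]

instance : Nonempty (l1Ball ι) := ⟨⟨0, zero_mem_l1Ball⟩⟩

lemma exists_mem_l1Ball_eq_smul (w : ι → ℝ) : ∃ θ ∈ l1Ball ι, w = (∑ j, |w j|) • θ := by
  rcases (sum_nonneg fun j _ => abs_nonneg (w j) : 0 ≤ ∑ j, |w j|).eq_or_lt with h | h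
  · refine ⟨0, zero_mem_l1Ball, funext fun j => ?_⟩
    simpa using (sum_eq_zero_iff_of_nonneg fun j _ => abs_nonneg (w j)).1 h.symm j (mem_univ j)
  · refine ⟨(∑ j, |w j|)⁻¹ • w, ?_, by rw [smul_smul, mul_inv_cancel₀ h.ne', one_smul]⟩
    change ∑ j, |(∑ j, |w j|)⁻¹ * w j| ≤ 1
    simp_rw [abs_mul, abs_inv, abs_of_pos h, ← mul_sum]
    exact (inv_mul_cancel₀ h.ne').le

lemma abs_dotProduct_le_of_mem_l1Ball {θ t : ι → ℝ} (hθ : θ ∈ l1Ball ι) {M : ℝ} (hM : 0 ≤ M)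
    (ht : ∀ j, |t j| ≤ M) : |θ ⬝ᵥ t| ≤ M :=
  calc |θ ⬝ᵥ t| ≤ ∑ j, |θ j| * M :=
        (abs_sum_le_sum_abs _ _).trans <| sum_le_sum fun j _ => by
          rw [abs_mul]; exact mul_le_mul_of_nonneg_left (ht j) (abs_nonneg _)
    _ ≤ M := by rw [← sum_mul]; exact mul_le_of_le_one_left hM hθ

end L1Ball

section Features

variable {n : ℕ} {ι : Type*} [Fintype ι] {V : Matrix (Fin n) ι ℝ}

lemma abs_mulVec_le_one (hV : ∀ i j, |V i j| ≤ 1) {θ : ι → ℝ} (hθ : θ ∈ l1Ball ι)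
    (i : Fin n) : |(V *ᵥ θ) i| ≤ 1 := by
  rw [mulVec, dotProduct_comm]
  exact abs_dotProduct_le_of_mem_l1Ball hθ zero_le_one (hV i)

def absCorrSup (V : Matrix (Fin n) ι ℝ) (ξ : Fin n → Bool) : ℝ :=
  ⨆ θ : l1Ball ι, signVec ξ ⬝ᵥ fun i => |(V *ᵥ θ) i|

lemma signVec_dotProduct_abs_le_absCorrSup (hV : ∀ i j, |V i j| ≤ 1) {θ : ι → ℝ}
    (hθ : θ ∈ l1Ball ι) (ξ : Fin n → Bool) :
    (signVec ξ ⬝ᵥ fun i => |(V *ᵥ θ) i|) ≤ absCorrSup V ξ :=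
  le_ciSup (f := fun θ : l1Ball ι => signVec ξ ⬝ᵥ fun i => |(V *ᵥ θ) i|)
    (bddAbove_range_signVec_dotProduct (C := 1)
      (fun θ i => by simpa using abs_mulVec_le_one hV θ.2 i) ξ) ⟨θ, hθ⟩

lemma absCorrSup_nonneg (hV : ∀ i j, |V i j| ≤ 1) (ξ : Fin n → Bool) : 0 ≤ absCorrSup V ξ := by
  simpa using signVec_dotProduct_abs_le_absCorrSup hV zero_mem_l1Ball ξ

variable [Nonempty ι]

lemma abs_signVec_dotProduct_mulVec_le {θ : ι → ℝ} (hθ : θ ∈ l1Ball ι) (ξ : Fin n → Bool) :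
    |signVec ξ ⬝ᵥ (V *ᵥ θ)| ≤ maxAbsCorr Vᵀ ξ := by
  rw [dotProduct_mulVec, dotProduct_comm]
  exact abs_dotProduct_le_of_mem_l1Ball hθ (maxAbsCorr_nonneg _ ξ)
    fun j => abs_le_maxAbsCorr Vᵀ ξ j

lemma sum_absCorrSup_le (hV : ∀ i j, |V i j| ≤ 1) :
    ∑ ξ, absCorrSup V ξ ≤ ∑ ξ, maxAbsCorr Vᵀ ξ := by
  have habs : LipschitzWith 1 (|·| : ℝ → ℝ) :=
    LipschitzWith.of_le_add fun s t => by
      rw [Real.dist_eq]; linarith [abs_sub_abs_le_abs_sub s t]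
  have hcontr := sum_ciSup_signVec_dotProduct_comp_le (u := fun θ : l1Ball ι => V *ᵥ θ)
    (fun θ i => abs_mulVec_le_one hV θ.2 i) habs
  refine hcontr.trans (sum_le_sum fun ξ _ => ciSup_le fun θ => ?_)
  exact (le_abs_self _).trans (abs_signVec_dotProduct_mulVec_le θ.2 ξ)

def neuronBound (V : Matrix (Fin n) ι ℝ) (ξ : Fin n → Bool) : ℝ :=
  (maxAbsCorr Vᵀ ξ + absCorrSup V ξ + absCorrSup V fun i => !ξ i) / 2

lemma relu_eq (t : ℝ) : relu t = (t + |t|) / 2 := by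
  rcases le_total 0 t with h | h
  · rw [relu, max_eq_left h, abs_of_nonneg h]; ring
  · rw [relu, max_eq_right h, abs_of_nonpos h]; ring

lemma abs_signVec_dotProduct_relu_mulVec_le (hV : ∀ i j, |V i j| ≤ 1) {θ : ι → ℝ}
    (hθ : θ ∈ l1Ball ι) (ξ : Fin n → Bool) :
    |signVec ξ ⬝ᵥ fun i => relu ((V *ᵥ θ) i)| ≤ neuronBound V ξ := by
  have hsplit : (signVec ξ ⬝ᵥ fun i => relu ((V *ᵥ θ) i)) =
      (signVec ξ ⬝ᵥ (V *ᵥ θ) + signVec ξ ⬝ᵥ fun i => |(V *ᵥ θ) i|) / 2 := by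
    simp only [dotProduct, relu_eq, ← sum_add_distrib, sum_div]
    exact sum_congr rfl fun i _ => by ring
  have hlin := abs_signVec_dotProduct_mulVec_le (V := V) hθ ξ
  have hpos := signVec_dotProduct_abs_le_absCorrSup hV hθ ξ
  have hneg := signVec_dotProduct_abs_le_absCorrSup hV hθ fun i => !ξ i
  rw [signVec_not, neg_dotProduct] at hneg
  have := absCorrSup_nonneg hV ξ
  have := absCorrSup_nonneg hV fun i => !ξ i
  rw [hsplit, neuronBound, abs_div, abs_two]
  gcongr
  refine (abs_add_le _ _).trans (add_le_add hlin ?_) |>.trans_eq (add_assoc _ _ _).symm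
  exact abs_le.2 ⟨by linarith, by linarith⟩

lemma sum_neuronBound_le (hV : ∀ i j, |V i j| ≤ 1) :
    ∑ ξ, neuronBound V ξ ≤ 3 / 2 * ∑ ξ, maxAbsCorr Vᵀ ξ := by
  have hnot := sum_comp_involutive involutive_not (absCorrSup V)
  have := sum_absCorrSup_le hV
  simp only [neuronBound, ← sum_div, sum_add_distrib, hnot]
  linarith

end Features

lemma mul_sqrt_le_mul_sqrt {a b x y : ℝ} (ha : 0 ≤ a) (hb : 0 ≤ b) (h : a ^ 2 * x ≤ b ^ 2 * y) :
    a * √x ≤ b * √y := by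
  rw [← sqrt_sq ha, ← sqrt_sq hb, ← sqrt_mul (sq_nonneg a), ← sqrt_mul (sq_nonneg b)]
  exact sqrt_le_sqrt h

lemma log_two_mul_add_one_le {t : ℝ} (ht : 2 ≤ t) : log (2 * (t + 1)) ≤ 3 / 2 * log (2 * t) := by
  have h4 : log 4 ≤ log (2 * t) := log_le_log (by norm_num) (by linarith)
  have : log 4 = 2 * log 2 := by rw [show (4 : ℝ) = 2 ^ 2 by norm_num, log_pow]; norm_num
  calc log (2 * (t + 1)) ≤ log (2 * (2 * t)) := log_le_log (by positivity) (by linarith)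
    _ = log 2 + log (2 * t) := log_mul (by norm_num) (by positivity)
    _ ≤ _ := by linarith

variable {n d : ℕ} {x : Fin n → Fin d → ℝ}

def withBias (x : Fin n → Fin d → ℝ) : Matrix (Fin n) (Fin (d + 1)) ℝ :=
  fun i => vecCons 1 (x i)

lemma abs_withBias_le_one (hx : ∀ i, x i ∈ cube d) (i : Fin n) (j : Fin (d + 1)) :
    |withBias x i j| ≤ 1 := by
  refine Fin.cases (by simp [withBias]) (fun j => ?_) j
  simp only [withBias, cons_val_succ]
  exact abs_le.2 ⟨(neg_nonpos.2 zero_le_one).trans ((hx i).1 j), (hx i).2 j⟩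

lemma withBias_mulVec_apply (θ : Fin (d + 1) → ℝ) (i : Fin n) :
    (withBias x *ᵥ θ) i = θ ⬝ᵥ vecCons 1 (x i) :=
  dotProduct_comm _ _

lemma act_eq_relu_dotProduct (y : Fin d → ℝ) (p : ℝ × (Fin d → ℝ) × ℝ) :
    act y p = p.1 * relu (vecCons p.2.2 p.2.1 ⬝ᵥ vecCons 1 y) := by
  rw [cons_dotProduct_cons, mul_one, add_comm]; rfl

lemma wt_eq (p : ℝ × (Fin d → ℝ) × ℝ) : wt p = |p.1| * ∑ j, |vecCons p.2.2 p.2.1 j| := by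
  simp [wt, l1norm, Fin.sum_univ_succ, add_comm]

lemma neuronBound_nonneg {ι : Type*} [Fintype ι] [Nonempty ι] {V : Matrix (Fin n) ι ℝ}
    (hV : ∀ i j, |V i j| ≤ 1) (ξ : Fin n → Bool) : 0 ≤ neuronBound V ξ := by
  have := maxAbsCorr_nonneg Vᵀ ξ
  have := absCorrSup_nonneg hV ξ
  have := absCorrSup_nonneg hV fun i => !ξ i
  rw [neuronBound]; positivity

lemma signVec_dotProduct_act_le (hx : ∀ i, x i ∈ cube d) (ξ : Fin n → Bool)
    (p : ℝ × (Fin d → ℝ) × ℝ) :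
    (signVec ξ ⬝ᵥ fun i => act (x i) p) ≤ wt p * neuronBound (withBias x) ξ := by
  obtain ⟨θ, hθ, hw⟩ := exists_mem_l1Ball_eq_smul (vecCons p.2.2 p.2.1)
  set W := ∑ j, |vecCons p.2.2 p.2.1 j|
  have hW : 0 ≤ W := sum_nonneg fun j _ => abs_nonneg _
  have hact : (fun i => act (x i) p) = (p.1 * W) • fun i => relu ((withBias x *ᵥ θ) i) := by
    ext i
    rw [Pi.smul_apply, smul_eq_mul, act_eq_relu_dotProduct, hw, smul_dotProduct, smul_eq_mul,
      withBias_mulVec_apply, relu_eq, relu_eq, abs_mul, abs_of_nonneg hW]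
    ring
  rw [hact, dotProduct_smul, smul_eq_mul, wt_eq, mul_assoc]
  refine (le_abs_self _).trans ?_
  rw [abs_mul, abs_mul, abs_of_nonneg hW, mul_assoc]
  gcongr
  exact abs_signVec_dotProduct_relu_mulVec_le (abs_withBias_le_one hx) hθ ξ

def barronBall (d : ℕ) (Q : ℝ) : Set ((Fin d → ℝ) → ℝ) :=
  {f | ∃ ρ : Measure (ℝ × (Fin d → ℝ) × ℝ), IsBarronRep f ρ ∧ Integrable wt ρ ∧ ∫ p, wt p ∂ρ ≤ Q}

lemma signVec_dotProduct_le_of_mem_barronBall (hx : ∀ i, x i ∈ cube d) {Q : ℝ}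
    {f : (Fin d → ℝ) → ℝ} (hf : f ∈ barronBall d Q) (ξ : Fin n → Bool) :
    (signVec ξ ⬝ᵥ fun i => f (x i)) ≤ Q * neuronBound (withBias x) ξ := by
  obtain ⟨ρ, ⟨-, hrep⟩, hwt, hQ⟩ := hf
  have hint : ∀ i, Integrable (fun p => signVec ξ i * act (x i) p) ρ := fun i =>
    (hrep _ (hx i)).1.const_mul _
  calc (signVec ξ ⬝ᵥ fun i => f (x i)) = ∫ p, signVec ξ ⬝ᵥ fun i => act (x i) p ∂ρ := by
        simp only [dotProduct]
        rw [integral_finsetSum _ fun i _ => hint i]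
        exact sum_congr rfl fun i _ => by rw [(hrep _ (hx i)).2, integral_const_mul]
    _ ≤ ∫ p, wt p * neuronBound (withBias x) ξ ∂ρ :=
        integral_mono (integrable_finsetSum _ fun i _ => hint i) (hwt.mul_const _)
          (signVec_dotProduct_act_le hx ξ)
    _ = (∫ p, wt p ∂ρ) * neuronBound (withBias x) ξ := integral_mul_const _ _
    _ ≤ Q * neuronBound (withBias x) ξ := by
        gcongr; exact neuronBound_nonneg (abs_withBias_le_one hx) ξ

lemma sSup_signVec_dotProduct_barronBall_le (hx : ∀ i, x i ∈ cube d) {Q : ℝ} (hQ : 0 ≤ Q)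
    (ξ : Fin n → Bool) :
    sSup ((fun f : (Fin d → ℝ) → ℝ => signVec ξ ⬝ᵥ fun i => f (x i)) '' barronBall d Q) ≤
      Q * neuronBound (withBias x) ξ :=
  Real.sSup_le (Set.forall_mem_image.2 fun _ hf => signVec_dotProduct_le_of_mem_barronBall hx hf ξ)
    (mul_nonneg hQ (neuronBound_nonneg (abs_withBias_le_one hx) ξ))

lemma three_halves_mul_sum_maxAbsCorr_withBias_le (hd : 1 ≤ d) (hn : 1 ≤ n)
    (hx : ∀ i, x i ∈ cube d) :
    3 / 2 * ∑ ξ, maxAbsCorr (withBias x)ᵀ ξ ≤ 2 ^ n * (2 * √(2 * n * log (2 * d))) := by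
  have hv : ∀ j i, |(withBias x)ᵀ j i| ≤ 1 := fun j i => abs_withBias_le_one hx i j
  rcases hd.eq_or_lt with rfl | hd
  · have h := sum_maxAbsCorr_le_sqrt hv
    calc _ ≤ 3 / 2 * (2 ^ n * √(2 * n)) := by
          gcongr; simpa using h
      _ = 2 ^ n * (3 / 2 * √(2 * n)) := by ring
      _ ≤ _ := by
          refine mul_le_mul_of_nonneg_left ?_ (by positivity)
          refine mul_sqrt_le_mul_sqrt (a := 3 / 2) (b := 2) (by norm_num) (by norm_num) ?_
          have := log_two_gt_d9
          have : (0 : ℝ) ≤ n := n.cast_nonneg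
          norm_num; nlinarith
  · have h := sum_maxAbsCorr_le_sqrt_log hv hn
    have hd' : (2 : ℝ) ≤ d := by exact_mod_cast hd
    have hlog := log_two_mul_add_one_le hd'
    calc _ ≤ 3 / 2 * (2 ^ n * √(2 * n * log (2 * (d + 1)))) := by
          gcongr; simpa using h
      _ = 2 ^ n * (3 / 2 * √(2 * n * log (2 * (d + 1)))) := by ring
      _ ≤ _ := by
          refine mul_le_mul_of_nonneg_left ?_ (by positivity)
          refine mul_sqrt_le_mul_sqrt (a := 3 / 2) (b := 2) (by norm_num) (by norm_num) ?_
          have : (0 : ℝ) ≤ n := n.cast_nonneg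
          have : 0 ≤ log (2 * d) := log_nonneg (by linarith)
          nlinarith

end Barron

open Barron

/-- Rademacher complexity bound for the Barron ball of radius `Q`. -/
theorem barron_rademacher {d : ℕ} (hd : 1 ≤ d) (n : ℕ) (hn : 1 ≤ n)
    (Q : ℝ) (hQ : 0 < Q) (x : Fin n → Fin d → ℝ) (hx : ∀ i, x i ∈ cube d) :
    (1 / (n * 2 ^ n) : ℝ) *
        ∑ ξ : Fin n → Bool,
          sSup ((fun f : (Fin d → ℝ) → ℝ =>
              ∑ i, (if ξ i then (1 : ℝ) else -1) * f (x i)) ''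
            {f | ∃ ρ : Measure (ℝ × (Fin d → ℝ) × ℝ),
              IsBarronRep f ρ ∧ Integrable wt ρ ∧ ∫ p, wt p ∂ρ ≤ Q}) ≤
      2 * Q * Real.sqrt (2 * Real.log (2 * d) / n) := by
  have hn' : (0 : ℝ) < n := by exact_mod_cast hn
  calc _ ≤ (1 / (n * 2 ^ n) : ℝ) * ∑ ξ, Q * neuronBound (withBias x) ξ := by
        gcongr with ξ
        exact sSup_signVec_dotProduct_barronBall_le hx hQ.le ξ
    _ ≤ (1 / (n * 2 ^ n) : ℝ) * (Q * (2 ^ n * (2 * √(2 * n * log (2 * d))))) := by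
        rw [← mul_sum]
        gcongr
        exact (sum_neuronBound_le (abs_withBias_le_one hx)).trans
          (three_halves_mul_sum_maxAbsCorr_withBias_le hd hn hx)
    _ = 2 * Q * √(2 * log (2 * d) / n) := by
        rw [show 2 * log (2 * d) / n = 2 * n * log (2 * d) / n ^ 2 by field_simp,
          sqrt_div' _ (sq_nonneg _), sqrt_sq hn'.le]
        field_simp
end
end
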